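/- Let δ ∈ (0,1], let K > 0, and let λ : closure(Ω_δ) → ℝ be a smooth function with λ ≥ 1 and |∇λ(x)| ≤ K λ(x) for all x. There is a constant C depending only on K such that for every smooth vector field v : closure(Ω_δ) → ℝ³ whose support has bounded horizontal projection (e.g. v compactly supported in the x_h-variables), ‖√λ ∇v‖²_{L²(Ω_δ)} ≤ C ( ‖√λ div v‖²_{L²(Ω_δ)} + ‖√λ curl v‖²_{L²(Ω_δ)} + ‖√λ v‖²_{L²(Ω_δ)} + |B(λ,v)| ), where B(λ,v) = ∫_{ℝ²} λ(x_h,δ)(v^h·∇_h v³ − v³ div_h v^h)(x_h,δ) dx_h − ∫_{ℝ²} λ(x_h,−δ)(v^h·∇_h v³ − v³ div_h v^h)(x_h,−δ) dx_h, v^h = (v¹,v²) denoting the horizontal components, div_h v^h = ∂₁v¹ + ∂₂v², and ∇v the full 3×3 Jacobian matrix. -/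

import Mathlib

noncomputable section

open scoped ContDiff

open MeasureTheory

/-- Points of ℝ³, written as `(x₁, x₂, x₃)`. -/
abbrev Pt3 := ℝ × ℝ × ℝ

/-- The thin domain `Ω_δ = ℝ² × (−δ, δ)`. -/
def Omg (δ : ℝ) : Set Pt3 := {x : Pt3 | x.2.2 ∈ Set.Ioo (-δ) δ}

/-- Partial derivative in `x₁`. -/
def pd1 (f : Pt3 → ℝ) : Pt3 → ℝ := fun x => deriv (fun s => f (s, x.2.1, x.2.2)) x.1

/-- Partial derivative in `x₂`. -/
def pd2 (f : Pt3 → ℝ) : Pt3 → ℝ := fun x => deriv (fun s => f (x.1, s, x.2.2)) x.2.1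

/-- Partial derivative in `x₃`. -/
def pd3 (f : Pt3 → ℝ) : Pt3 → ℝ := fun x => deriv (fun s => f (x.1, x.2.1, s)) x.2.2

/-- The partial derivatives, indexed by `Fin 3`. -/
def pdv : Fin 3 → (Pt3 → ℝ) → (Pt3 → ℝ) := ![pd1, pd2, pd3]

/-- The boundary term
`B(λ,v) = ∫_{ℝ²} λ(·,δ)(v^h·∇_h v³ − v³ div_h v^h)(·,δ) − ∫_{ℝ²} λ(·,−δ)(v^h·∇_h v³ − v³ div_h v^h)(·,−δ)`. -/
def Bdry (δ : ℝ) (lam : Pt3 → ℝ) (v : Fin 3 → Pt3 → ℝ) : ℝ :=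
  (∫ w : ℝ × ℝ, lam (w.1, w.2, δ) *
      (v 0 (w.1, w.2, δ) * pd1 (v 2) (w.1, w.2, δ)
        + v 1 (w.1, w.2, δ) * pd2 (v 2) (w.1, w.2, δ)
        - v 2 (w.1, w.2, δ) * (pd1 (v 0) (w.1, w.2, δ) + pd2 (v 1) (w.1, w.2, δ))))
  - (∫ w : ℝ × ℝ, lam (w.1, w.2, -δ) *
      (v 0 (w.1, w.2, -δ) * pd1 (v 2) (w.1, w.2, -δ)
        + v 1 (w.1, w.2, -δ) * pd2 (v 2) (w.1, w.2, -δ)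
        - v 2 (w.1, w.2, -δ) * (pd1 (v 0) (w.1, w.2, -δ) + pd2 (v 1) (w.1, w.2, -δ))))

/-- smoothness predicate we actually use -/
abbrev SM (f : Pt3 → ℝ) : Prop := ContDiff ℝ ∞ f

-- curves
lemma hasDerivAt_c1 (a b s : ℝ) : HasDerivAt (fun s : ℝ => ((s, a, b) : Pt3)) (1,0,0) s :=
  (hasDerivAt_id s).prodMk ((hasDerivAt_const s a).prodMk (hasDerivAt_const s b))
lemma hasDerivAt_c2 (a b s : ℝ) : HasDerivAt (fun s : ℝ => ((a, s, b) : Pt3)) (0,1,0) s :=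
  (hasDerivAt_const s a).prodMk ((hasDerivAt_id s).prodMk (hasDerivAt_const s b))
lemma hasDerivAt_c3 (a b s : ℝ) : HasDerivAt (fun s : ℝ => ((a, b, s) : Pt3)) (0,0,1) s :=
  (hasDerivAt_const s a).prodMk ((hasDerivAt_const s b).prodMk (hasDerivAt_id s))

lemma hasDerivAt_line1 {f : Pt3 → ℝ} (hf : Differentiable ℝ f) (x : Pt3) :
    HasDerivAt (fun s => f (s, x.2.1, x.2.2)) (fderiv ℝ f x ((1:ℝ),(0:ℝ),(0:ℝ))) x.1 := by
  have := ((hf (x.1, x.2.1, x.2.2)).hasFDerivAt).comp_hasDerivAt x.1 (hasDerivAt_c1 x.2.1 x.2.2 x.1)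
  exact this

lemma hasDerivAt_line2 {f : Pt3 → ℝ} (hf : Differentiable ℝ f) (x : Pt3) :
    HasDerivAt (fun s => f (x.1, s, x.2.2)) (fderiv ℝ f x ((0:ℝ),(1:ℝ),(0:ℝ))) x.2.1 := by
  have := ((hf (x.1, x.2.1, x.2.2)).hasFDerivAt).comp_hasDerivAt x.2.1 (hasDerivAt_c2 x.1 x.2.2 x.2.1)
  exact this

lemma hasDerivAt_line3 {f : Pt3 → ℝ} (hf : Differentiable ℝ f) (x : Pt3) :
    HasDerivAt (fun s => f (x.1, x.2.1, s)) (fderiv ℝ f x ((0:ℝ),(0:ℝ),(1:ℝ))) x.2.2 := by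
  have := ((hf (x.1, x.2.1, x.2.2)).hasFDerivAt).comp_hasDerivAt x.2.2 (hasDerivAt_c3 x.1 x.2.1 x.2.2)
  exact this

lemma pd1_eq {f : Pt3 → ℝ} (hf : Differentiable ℝ f) (x : Pt3) :
    pd1 f x = fderiv ℝ f x ((1:ℝ),(0:ℝ),(0:ℝ)) := (hasDerivAt_line1 hf x).deriv
lemma pd2_eq {f : Pt3 → ℝ} (hf : Differentiable ℝ f) (x : Pt3) :
    pd2 f x = fderiv ℝ f x ((0:ℝ),(1:ℝ),(0:ℝ)) := (hasDerivAt_line2 hf x).deriv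
lemma pd3_eq {f : Pt3 → ℝ} (hf : Differentiable ℝ f) (x : Pt3) :
    pd3 f x = fderiv ℝ f x ((0:ℝ),(0:ℝ),(1:ℝ)) := (hasDerivAt_line3 hf x).deriv

lemma SM.diff {f : Pt3 → ℝ} (hf : SM f) : Differentiable ℝ f :=
  hf.differentiable (by simp)

lemma sm_pd1 {f : Pt3 → ℝ} (hf : SM f) : SM (pd1 f) := by
  have h1 : SM (fun x => fderiv ℝ f x ((1:ℝ),(0:ℝ),(0:ℝ))) :=
    (hf.fderiv_right (le_refl _)).clm_apply contDiff_const
  have : pd1 f = fun x => fderiv ℝ f x ((1:ℝ),(0:ℝ),(0:ℝ)) := funext (pd1_eq hf.diff)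
  rw [this]; exact h1

lemma sm_pd2 {f : Pt3 → ℝ} (hf : SM f) : SM (pd2 f) := by
  have h1 : SM (fun x => fderiv ℝ f x ((0:ℝ),(1:ℝ),(0:ℝ))) :=
    (hf.fderiv_right (le_refl _)).clm_apply contDiff_const
  have : pd2 f = fun x => fderiv ℝ f x ((0:ℝ),(1:ℝ),(0:ℝ)) := funext (pd2_eq hf.diff)
  rw [this]; exact h1

lemma sm_pd3 {f : Pt3 → ℝ} (hf : SM f) : SM (pd3 f) := by
  have h1 : SM (fun x => fderiv ℝ f x ((0:ℝ),(0:ℝ),(1:ℝ))) :=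
    (hf.fderiv_right (le_refl _)).clm_apply contDiff_const
  have : pd3 f = fun x => fderiv ℝ f x ((0:ℝ),(0:ℝ),(1:ℝ)) := funext (pd3_eq hf.diff)
  rw [this]; exact h1

lemma fderiv_fderiv_symm {f : Pt3 → ℝ} (hf : SM f) (x : Pt3) (a b : Pt3) :
    fderiv ℝ (fun y => fderiv ℝ f y a) x b = fderiv ℝ (fun y => fderiv ℝ f y b) x a := by
  have hdf : ContDiff ℝ ∞ (fun y => fderiv ℝ f y) := hf.fderiv_right (le_refl _)
  have hdfd : DifferentiableAt ℝ (fun y => fderiv ℝ f y) x := hdf.differentiable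
    (by simp) x
  have h1 : fderiv ℝ (fun y => fderiv ℝ f y a) x b = fderiv ℝ (fderiv ℝ f) x b a := by
    rw [fderiv_clm_apply hdfd (differentiableAt_const a)]
    simp
  have h2 : fderiv ℝ (fun y => fderiv ℝ f y b) x a = fderiv ℝ (fderiv ℝ f) x a b := by
    rw [fderiv_clm_apply hdfd (differentiableAt_const b)]
    simp
  rw [h1, h2]
  exact second_derivative_symmetric (fun y => (hf.diff y).hasFDerivAt) hdfd.hasFDerivAt b a

lemma pd_comm12 {f : Pt3 → ℝ} (hf : SM f) (x : Pt3) : pd1 (pd2 f) x = pd2 (pd1 f) x := by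
  have e2 : pd2 f = fun y => fderiv ℝ f y ((0:ℝ),(1:ℝ),(0:ℝ)) := funext (pd2_eq hf.diff)
  have e1 : pd1 f = fun y => fderiv ℝ f y ((1:ℝ),(0:ℝ),(0:ℝ)) := funext (pd1_eq hf.diff)
  rw [pd1_eq (sm_pd2 hf).diff, pd2_eq (sm_pd1 hf).diff, e1, e2]
  exact fderiv_fderiv_symm hf x _ _

lemma pd_comm13 {f : Pt3 → ℝ} (hf : SM f) (x : Pt3) : pd1 (pd3 f) x = pd3 (pd1 f) x := by
  have e2 : pd3 f = fun y => fderiv ℝ f y ((0:ℝ),(0:ℝ),(1:ℝ)) := funext (pd3_eq hf.diff)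
  have e1 : pd1 f = fun y => fderiv ℝ f y ((1:ℝ),(0:ℝ),(0:ℝ)) := funext (pd1_eq hf.diff)
  rw [pd1_eq (sm_pd3 hf).diff, pd3_eq (sm_pd1 hf).diff, e1, e2]
  exact fderiv_fderiv_symm hf x _ _

lemma pd_comm23 {f : Pt3 → ℝ} (hf : SM f) (x : Pt3) : pd2 (pd3 f) x = pd3 (pd2 f) x := by
  have e2 : pd3 f = fun y => fderiv ℝ f y ((0:ℝ),(0:ℝ),(1:ℝ)) := funext (pd3_eq hf.diff)
  have e1 : pd2 f = fun y => fderiv ℝ f y ((0:ℝ),(1:ℝ),(0:ℝ)) := funext (pd2_eq hf.diff)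
  rw [pd2_eq (sm_pd3 hf).diff, pd3_eq (sm_pd2 hf).diff, e1, e2]
  exact fderiv_fderiv_symm hf x _ _

lemma pd1_mul {f g : Pt3 → ℝ} (hf : SM f) (hg : SM g) (x : Pt3) :
    pd1 (fun y => f y * g y) x = pd1 f x * g x + f x * pd1 g x := by
  have h1 := (hasDerivAt_line1 hf.diff x).differentiableAt
  have h2 := (hasDerivAt_line1 hg.diff x).differentiableAt
  exact deriv_mul h1 h2

lemma pd2_mul {f g : Pt3 → ℝ} (hf : SM f) (hg : SM g) (x : Pt3) :
    pd2 (fun y => f y * g y) x = pd2 f x * g x + f x * pd2 g x := by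
  have h1 := (hasDerivAt_line2 hf.diff x).differentiableAt
  have h2 := (hasDerivAt_line2 hg.diff x).differentiableAt
  exact deriv_mul h1 h2

lemma pd3_mul {f g : Pt3 → ℝ} (hf : SM f) (hg : SM g) (x : Pt3) :
    pd3 (fun y => f y * g y) x = pd3 f x * g x + f x * pd3 g x := by
  have h1 := (hasDerivAt_line3 hf.diff x).differentiableAt
  have h2 := (hasDerivAt_line3 hg.diff x).differentiableAt
  exact deriv_mul h1 h2

lemma pd1_add {f g : Pt3 → ℝ} (hf : SM f) (hg : SM g) (x : Pt3) :
    pd1 (fun y => f y + g y) x = pd1 f x + pd1 g x :=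
  deriv_add (hasDerivAt_line1 hf.diff x).differentiableAt (hasDerivAt_line1 hg.diff x).differentiableAt

lemma pd2_add {f g : Pt3 → ℝ} (hf : SM f) (hg : SM g) (x : Pt3) :
    pd2 (fun y => f y + g y) x = pd2 f x + pd2 g x :=
  deriv_add (hasDerivAt_line2 hf.diff x).differentiableAt (hasDerivAt_line2 hg.diff x).differentiableAt

lemma pd3_add {f g : Pt3 → ℝ} (hf : SM f) (hg : SM g) (x : Pt3) :
    pd3 (fun y => f y + g y) x = pd3 f x + pd3 g x :=
  deriv_add (hasDerivAt_line3 hf.diff x).differentiableAt (hasDerivAt_line3 hg.diff x).differentiableAt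

lemma pd1_sub {f g : Pt3 → ℝ} (hf : SM f) (hg : SM g) (x : Pt3) :
    pd1 (fun y => f y - g y) x = pd1 f x - pd1 g x :=
  deriv_sub (hasDerivAt_line1 hf.diff x).differentiableAt (hasDerivAt_line1 hg.diff x).differentiableAt

lemma pd2_sub {f g : Pt3 → ℝ} (hf : SM f) (hg : SM g) (x : Pt3) :
    pd2 (fun y => f y - g y) x = pd2 f x - pd2 g x :=
  deriv_sub (hasDerivAt_line2 hf.diff x).differentiableAt (hasDerivAt_line2 hg.diff x).differentiableAt

lemma pd3_sub {f g : Pt3 → ℝ} (hf : SM f) (hg : SM g) (x : Pt3) :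
    pd3 (fun y => f y - g y) x = pd3 f x - pd3 g x :=
  deriv_sub (hasDerivAt_line3 hf.diff x).differentiableAt (hasDerivAt_line3 hg.diff x).differentiableAt

/-- vanishing outside horizontal radius R -/
def Van (R : ℝ) (f : Pt3 → ℝ) : Prop := ∀ x : Pt3, R < Real.sqrt (x.1^2 + x.2.1^2) → f x = 0

def UU (R : ℝ) : Set Pt3 := {x : Pt3 | R < Real.sqrt (x.1^2 + x.2.1^2)}

lemma isOpen_UU (R : ℝ) : IsOpen (UU R) := by
  have hc : Continuous (fun x : Pt3 => Real.sqrt (x.1^2 + x.2.1^2)) := by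
    apply Real.continuous_sqrt.comp; fun_prop
  exact isOpen_lt continuous_const hc

lemma Van.mul_left {R : ℝ} {g : Pt3 → ℝ} (f : Pt3 → ℝ) (hg : Van R g) :
    Van R (fun y => f y * g y) := fun x hx => by simp only []; rw [hg x hx, mul_zero]

lemma Van.mul_right {R : ℝ} {f : Pt3 → ℝ} (g : Pt3 → ℝ) (hf : Van R f) :
    Van R (fun y => f y * g y) := fun x hx => by simp only []; rw [hf x hx, zero_mul]

lemma Van.add {R : ℝ} {f g : Pt3 → ℝ} (hf : Van R f) (hg : Van R g) :
    Van R (fun y => f y + g y) := fun x hx => by simp only []; rw [hf x hx, hg x hx, add_zero]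

lemma Van.sub {R : ℝ} {f g : Pt3 → ℝ} (hf : Van R f) (hg : Van R g) :
    Van R (fun y => f y - g y) := fun x hx => by simp only []; rw [hf x hx, hg x hx, sub_zero]

lemma Van.pd1 {R : ℝ} {f : Pt3 → ℝ} (hf : Van R f) : Van R (_root_.pd1 f) := by
  intro x hx
  have hev : (fun s => f (s, x.2.1, x.2.2)) =ᶠ[nhds x.1] (fun _ => (0:ℝ)) := by
    have hU : {s : ℝ | (s, x.2.1, x.2.2) ∈ UU R} ∈ nhds x.1 := by
      have hcont : Continuous (fun s : ℝ => ((s, x.2.1, x.2.2) : Pt3)) := by fun_prop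
      exact (isOpen_UU R).preimage hcont |>.mem_nhds hx
    filter_upwards [hU] with s hs
    exact hf _ hs
  show deriv _ _ = 0
  rw [hev.deriv_eq, deriv_const]

lemma Van.pd2 {R : ℝ} {f : Pt3 → ℝ} (hf : Van R f) : Van R (_root_.pd2 f) := by
  intro x hx
  have hev : (fun s => f (x.1, s, x.2.2)) =ᶠ[nhds x.2.1] (fun _ => (0:ℝ)) := by
    have hU : {s : ℝ | ((x.1, s, x.2.2) : Pt3) ∈ UU R} ∈ nhds x.2.1 := by
      have hcont : Continuous (fun s : ℝ => ((x.1, s, x.2.2) : Pt3)) := by fun_prop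
      exact (isOpen_UU R).preimage hcont |>.mem_nhds hx
    filter_upwards [hU] with s hs
    exact hf _ hs
  show deriv _ _ = 0
  rw [hev.deriv_eq, deriv_const]

lemma Van.pd3 {R : ℝ} {f : Pt3 → ℝ} (hf : Van R f) : Van R (_root_.pd3 f) := by
  intro x hx
  have hev : (fun s => f (x.1, x.2.1, s)) =ᶠ[nhds x.2.2] (fun _ => (0:ℝ)) := by
    have hU : {s : ℝ | ((x.1, x.2.1, s) : Pt3) ∈ UU R} ∈ nhds x.2.2 := by
      have hcont : Continuous (fun s : ℝ => ((x.1, x.2.1, s) : Pt3)) := by fun_prop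
      exact (isOpen_UU R).preimage hcont |>.mem_nhds hx
    filter_upwards [hU] with s hs
    exact hf _ hs
  show deriv _ _ = 0
  rw [hev.deriv_eq, deriv_const]

lemma omg_eq_prod (δ : ℝ) :
    Omg δ = (Set.univ : Set ℝ) ×ˢ ((Set.univ : Set ℝ) ×ˢ Set.Ioo (-δ) δ) := by
  ext x; simp [Omg]

lemma omg_meas (δ : ℝ) : MeasurableSet (Omg δ) := by
  rw [omg_eq_prod]
  exact MeasurableSet.univ.prod (MeasurableSet.univ.prod measurableSet_Ioo)

lemma restrict_omg (δ : ℝ) :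
    (volume : Measure Pt3).restrict (Omg δ) =
      Measure.prod volume (Measure.prod volume (volume.restrict (Set.Ioo (-δ) δ))) := by
  rw [omg_eq_prod, MeasureTheory.Measure.volume_eq_prod, ← Measure.prod_restrict,
    Measure.restrict_univ, MeasureTheory.Measure.volume_eq_prod, ← Measure.prod_restrict,
    Measure.restrict_univ]

lemma sqrt_ge_abs1 (a b : ℝ) : |a| ≤ Real.sqrt (a^2 + b^2) := by
  rw [← Real.sqrt_sq_eq_abs]
  exact Real.sqrt_le_sqrt (by nlinarith [sq_nonneg b])

lemma sqrt_ge_abs2 (a b : ℝ) : |b| ≤ Real.sqrt (a^2 + b^2) := by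
  rw [← Real.sqrt_sq_eq_abs]
  exact Real.sqrt_le_sqrt (by nlinarith [sq_nonneg a])

/-- integrability of continuous functions with bounded horizontal support on the thin slab -/
lemma integrableOn_helper {f : Pt3 → ℝ} (hf : Continuous f) {R : ℝ} (hv : Van R f)
    {δ : ℝ} (hδ1 : δ ≤ 1) : IntegrableOn f (Omg δ) := by
  set M : ℝ := max R 0 + 1 with hM
  set B : Set Pt3 := Set.Icc (-M) M ×ˢ (Set.Icc (-M) M ×ˢ Set.Icc (-1:ℝ) 1) with hB
  have hBc : IsCompact B := (isCompact_Icc.prod (isCompact_Icc.prod isCompact_Icc))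
  have hint : IntegrableOn f B := hf.continuousOn.integrableOn_compact hBc
  have hzero : ∀ x ∈ Omg δ \ B, f x = 0 := by
    rintro ⟨x1, x2, x3⟩ ⟨hx, hxB⟩
    have hx3 : x3 ∈ Set.Icc (-1:ℝ) 1 := by
      simp only [Omg, Set.mem_setOf_eq, Set.mem_Ioo] at hx
      constructor <;> [linarith [hx.1]; linarith [hx.2]]
    apply hv
    have habs : M ≤ |x1| ∨ M ≤ |x2| := by
      by_contra hcon
      push_neg at hcon
      exact hxB ⟨Set.mem_Icc.mpr (abs_le.mp hcon.1.le),
        Set.mem_Icc.mpr (abs_le.mp hcon.2.le), hx3⟩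
    have hMR : R < M := by simp [hM]; nlinarith [le_max_left R 0]
    rcases habs with h | h
    · exact lt_of_lt_of_le hMR (le_trans h (sqrt_ge_abs1 x1 x2))
    · exact lt_of_lt_of_le hMR (le_trans h (sqrt_ge_abs2 x1 x2))
  have hsplit : Omg δ ⊆ (Omg δ ∩ B) ∪ (Omg δ \ B) := by
    intro x hx
    by_cases hxB : x ∈ B
    · exact Or.inl ⟨hx, hxB⟩
    · exact Or.inr ⟨hx, hxB⟩
  refine IntegrableOn.mono_set ?_ hsplit
  apply IntegrableOn.union
  · exact hint.mono_set Set.inter_subset_right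
  · rw [integrableOn_congr_fun hzero ((omg_meas δ).diff hBc.measurableSet)]
    exact integrableOn_zero

lemma iterated {δ : ℝ} {f : Pt3 → ℝ} (hf : IntegrableOn f (Omg δ)) :
    ∫ x in Omg δ, f x = ∫ x₁ : ℝ, ∫ x₂ : ℝ, ∫ t in Set.Ioo (-δ) δ, f (x₁, x₂, t) := by
  have hf' : Integrable f (Measure.prod volume (Measure.prod volume
      (volume.restrict (Set.Ioo (-δ) δ)))) := by
    rw [← restrict_omg]; exact hf
  rw [show (∫ x in Omg δ, f x) = ∫ x, f x ∂((volume : Measure Pt3).restrict (Omg δ)) from rfl,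
    restrict_omg, MeasureTheory.integral_prod f hf']
  apply integral_congr_ae
  filter_upwards [hf'.prod_right_ae] with x₁ hx₁
  rw [MeasureTheory.integral_prod _ hx₁]

/-- FTC for compactly supported derivative on ℝ -/
lemma oneD_integral_deriv {φ φ' : ℝ → ℝ} (h : ∀ s, HasDerivAt φ (φ' s) s)
    (hc : Continuous φ') {M : ℝ} (hM : 0 ≤ M) (hsupp : ∀ s, M < |s| → φ s = 0) :
    ∫ s : ℝ, φ' s = 0 := by
  have hzero : ∀ s, M < |s| → φ' s = 0 := by
    intro s hs
    have hev : φ =ᶠ[nhds s] (fun _ => (0:ℝ)) := by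
      have hU : {u : ℝ | M < |u|} ∈ nhds s :=
        (isOpen_lt continuous_const continuous_abs).mem_nhds hs
      filter_upwards [hU] with u hu
      exact hsupp u hu
    rw [← (h s).deriv, hev.deriv_eq, deriv_const]
  have h1 : ∫ s : ℝ, φ' s = ∫ s in Set.Icc (-(M+1)) (M+1), φ' s := by
    symm
    apply setIntegral_eq_integral_of_forall_compl_eq_zero
    intro s hs
    apply hzero
    simp only [Set.mem_Icc, not_and_or, not_le] at hs
    rcases hs with hs | hs
    · rw [abs_of_neg (by linarith)]; linarith
    · rw [abs_of_pos (by linarith)]; linarith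
  rw [h1, MeasureTheory.integral_Icc_eq_integral_Ioc,
    ← intervalIntegral.integral_of_le (by linarith : -(M+1) ≤ M+1)]
  have hftc : ∫ s in (-(M+1))..(M+1), φ' s = φ (M+1) - φ (-(M+1)) := by
    apply intervalIntegral.integral_eq_sub_of_hasDerivAt
    · exact fun s _ => h s
    · exact hc.intervalIntegrable _ _
  rw [hftc, hsupp _ (by rw [abs_of_pos (by linarith)]; linarith),
    hsupp _ (by rw [abs_of_neg (by linarith)]; linarith), sub_zero]

lemma ibp1 {F : Pt3 → ℝ} (hF : SM F) {R : ℝ} (hvF : Van R F) {δ : ℝ} (hδ1 : δ ≤ 1) :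
    ∫ x in Omg δ, pd1 F x = 0 := by
  have hint : IntegrableOn (pd1 F) (Omg δ) :=
    integrableOn_helper (sm_pd1 hF).continuous hvF.pd1 hδ1
  have hf' : Integrable (pd1 F) (Measure.prod volume (Measure.prod volume
      (volume.restrict (Set.Ioo (-δ) δ)))) := by
    rw [← restrict_omg]; exact hint
  rw [show (∫ x in Omg δ, pd1 F x) = ∫ x, pd1 F x ∂((volume : Measure Pt3).restrict (Omg δ))
      from rfl, restrict_omg, MeasureTheory.integral_prod_symm _ hf']
  have hinner : ∀ y : ℝ × ℝ, ∫ x₁ : ℝ, pd1 F (x₁, y) = 0 := by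
    intro y
    refine oneD_integral_deriv (φ := fun s => F (s, y.1, y.2)) (M := max R 0) ?_ ?_
      (le_max_right R 0) ?_
    · intro s
      exact ((hasDerivAt_line1 hF.diff (s, y)).differentiableAt).hasDerivAt
    · exact (sm_pd1 hF).continuous.comp (by fun_prop)
    · intro s hs
      apply hvF
      calc R ≤ max R 0 := le_max_left R 0
        _ < |s| := hs
        _ ≤ Real.sqrt (s^2 + y.1^2) := sqrt_ge_abs1 s y.1
  simp only [hinner, integral_zero]

lemma ibp2 {F : Pt3 → ℝ} (hF : SM F) {R : ℝ} (hvF : Van R F) {δ : ℝ} (hδ1 : δ ≤ 1) :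
    ∫ x in Omg δ, pd2 F x = 0 := by
  have hint : IntegrableOn (pd2 F) (Omg δ) :=
    integrableOn_helper (sm_pd2 hF).continuous hvF.pd2 hδ1
  have hf' : Integrable (pd2 F) (Measure.prod volume (Measure.prod volume
      (volume.restrict (Set.Ioo (-δ) δ)))) := by
    rw [← restrict_omg]; exact hint
  rw [show (∫ x in Omg δ, pd2 F x) = ∫ x, pd2 F x ∂((volume : Measure Pt3).restrict (Omg δ))
      from rfl, restrict_omg, MeasureTheory.integral_prod _ hf']
  have : ∀ᵐ x₁ : ℝ, (∫ y : ℝ × ℝ, pd2 F (x₁, y)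
      ∂(Measure.prod volume (volume.restrict (Set.Ioo (-δ) δ)))) = 0 := by
    filter_upwards [hf'.prod_right_ae] with x₁ hx₁
    rw [MeasureTheory.integral_prod_symm _ hx₁]
    have hinner : ∀ t : ℝ, ∫ x₂ : ℝ, pd2 F (x₁, x₂, t) = 0 := by
      intro t
      refine oneD_integral_deriv (φ := fun s => F (x₁, s, t)) (M := max R 0) ?_ ?_
        (le_max_right R 0) ?_
      · intro s
        exact ((hasDerivAt_line2 hF.diff (x₁, s, t)).differentiableAt).hasDerivAt
      · exact (sm_pd2 hF).continuous.comp (by fun_prop)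
      · intro s hs
        apply hvF
        calc R ≤ max R 0 := le_max_left R 0
          _ < |s| := hs
          _ ≤ Real.sqrt (x₁^2 + s^2) := sqrt_ge_abs2 x₁ s
    simp only [hinner, integral_zero]
  calc ∫ x₁ : ℝ, (∫ y : ℝ × ℝ, pd2 F (x₁, y)
        ∂(Measure.prod volume (volume.restrict (Set.Ioo (-δ) δ))))
      = ∫ x₁ : ℝ, (0:ℝ) := integral_congr_ae this
    _ = 0 := integral_zero _ _

lemma integrable_bdry {g : ℝ × ℝ → ℝ} (hg : Continuous g) {R : ℝ}
    (hv : ∀ w : ℝ × ℝ, R < Real.sqrt (w.1^2 + w.2^2) → g w = 0) :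
    Integrable g (volume : Measure (ℝ × ℝ)) := by
  apply hg.integrable_of_hasCompactSupport
  apply HasCompactSupport.intro (K := Set.Icc (-(max R 0)) (max R 0) ×ˢ
    Set.Icc (-(max R 0)) (max R 0)) (isCompact_Icc.prod isCompact_Icc)
  intro w hw
  apply hv
  have : max R 0 < |w.1| ∨ max R 0 < |w.2| := by
    by_contra hcon
    push_neg at hcon
    exact hw ⟨Set.mem_Icc.mpr (abs_le.mp hcon.1), Set.mem_Icc.mpr (abs_le.mp hcon.2)⟩
  rcases this with h | h
  · exact lt_of_le_of_lt (le_max_left R 0) (lt_of_lt_of_le h (sqrt_ge_abs1 w.1 w.2))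
  · exact lt_of_le_of_lt (le_max_left R 0) (lt_of_lt_of_le h (sqrt_ge_abs2 w.1 w.2))

lemma ibp3 {F : Pt3 → ℝ} (hF : SM F) {R : ℝ} (hvF : Van R F) {δ : ℝ} (hδ : 0 < δ)
    (hδ1 : δ ≤ 1) :
    ∫ x in Omg δ, pd3 F x
      = (∫ w : ℝ × ℝ, F (w.1, w.2, δ)) - ∫ w : ℝ × ℝ, F (w.1, w.2, -δ) := by
  have hint : IntegrableOn (pd3 F) (Omg δ) :=
    integrableOn_helper (sm_pd3 hF).continuous hvF.pd3 hδ1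
  rw [iterated hint]
  have hinner : ∀ (x₁ x₂ : ℝ), (∫ t in Set.Ioo (-δ) δ, pd3 F (x₁, x₂, t))
      = F (x₁, x₂, δ) - F (x₁, x₂, -δ) := by
    intro x₁ x₂
    rw [← MeasureTheory.integral_Ioc_eq_integral_Ioo,
      ← intervalIntegral.integral_of_le (by linarith : -δ ≤ δ)]
    apply intervalIntegral.integral_eq_sub_of_hasDerivAt
    · intro t _
      exact ((hasDerivAt_line3 hF.diff (x₁, x₂, t)).differentiableAt).hasDerivAt
    · exact ((sm_pd3 hF).continuous.comp (by fun_prop : Continuous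
        (fun t : ℝ => ((x₁, x₂, t) : Pt3)))).intervalIntegrable _ _
  simp only [hinner]
  have hg1 : Integrable (fun w : ℝ × ℝ => F (w.1, w.2, δ)) volume := by
    apply integrable_bdry (hF.continuous.comp (by fun_prop))
    intro w hw
    exact hvF (w.1, w.2, δ) hw
  have hg2 : Integrable (fun w : ℝ × ℝ => F (w.1, w.2, -δ)) volume := by
    apply integrable_bdry (hF.continuous.comp (by fun_prop))
    intro w hw
    exact hvF (w.1, w.2, -δ) hw
  have hsub := hg1.sub hg2
  have := MeasureTheory.integral_prod (fun w : ℝ × ℝ => F (w.1, w.2, δ) - F (w.1, w.2, -δ))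
    (by rw [← MeasureTheory.Measure.volume_eq_prod]; exact hsub)
  rw [MeasureTheory.Measure.volume_eq_prod] at hsub ⊢
  calc ∫ x₁ : ℝ, ∫ x₂ : ℝ, (F (x₁, x₂, δ) - F (x₁, x₂, -δ))
      = ∫ w : ℝ × ℝ, (F (w.1, w.2, δ) - F (w.1, w.2, -δ)) ∂(Measure.prod volume volume) :=
        this.symm
    _ = (∫ w : ℝ × ℝ, F (w.1, w.2, δ) ∂(Measure.prod volume volume))
        - ∫ w : ℝ × ℝ, F (w.1, w.2, -δ) ∂(Measure.prod volume volume) := by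
        apply integral_sub
        · rw [← MeasureTheory.Measure.volume_eq_prod]; exact hg1
        · rw [← MeasureTheory.Measure.volume_eq_prod]; exact hg2
    _ = (∫ w : ℝ × ℝ, F (w.1, w.2, δ)) - ∫ w : ℝ × ℝ, F (w.1, w.2, -δ) := by
        rw [← MeasureTheory.Measure.volume_eq_prod]

lemma hasDerivAt_pd1 {f : Pt3 → ℝ} (hf : SM f) (x : Pt3) :
    HasDerivAt (fun s => f (s, x.2.1, x.2.2)) (pd1 f x) x.1 :=
  (hasDerivAt_line1 hf.diff x).differentiableAt.hasDerivAt

lemma hasDerivAt_pd2 {f : Pt3 → ℝ} (hf : SM f) (x : Pt3) :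
    HasDerivAt (fun s => f (x.1, s, x.2.2)) (pd2 f x) x.2.1 :=
  (hasDerivAt_line2 hf.diff x).differentiableAt.hasDerivAt

lemma hasDerivAt_pd3 {f : Pt3 → ℝ} (hf : SM f) (x : Pt3) :
    HasDerivAt (fun s => f (x.1, x.2.1, s)) (pd3 f x) x.2.2 :=
  (hasDerivAt_line3 hf.diff x).differentiableAt.hasDerivAt

lemma pd1_lam_G (lam a b c d e f g h : Pt3 → ℝ) (hl : SM lam) (ha : SM a) (hb : SM b)
    (hc : SM c) (hd : SM d) (he : SM e) (hf : SM f) (hg : SM g) (hh : SM h) (x : Pt3) :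
    pd1 (fun y => lam y * (a y * b y + c y * d y - e y * f y - g y * h y)) x
    = pd1 lam x * (a x * b x + c x * d x - e x * f x - g x * h x)
      + lam x * ((pd1 a x * b x + a x * pd1 b x) + (pd1 c x * d x + c x * pd1 d x)
          - (pd1 e x * f x + e x * pd1 f x) - (pd1 g x * h x + g x * pd1 h x)) := by
  have A := (hasDerivAt_pd1 ha x).mul (hasDerivAt_pd1 hb x)
  have C := (hasDerivAt_pd1 hc x).mul (hasDerivAt_pd1 hd x)
  have E := (hasDerivAt_pd1 he x).mul (hasDerivAt_pd1 hf x)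
  have G := (hasDerivAt_pd1 hg x).mul (hasDerivAt_pd1 hh x)
  exact ((hasDerivAt_pd1 hl x).mul (((A.add C).sub E).sub G)).deriv

lemma pd2_lam_G (lam a b c d e f g h : Pt3 → ℝ) (hl : SM lam) (ha : SM a) (hb : SM b)
    (hc : SM c) (hd : SM d) (he : SM e) (hf : SM f) (hg : SM g) (hh : SM h) (x : Pt3) :
    pd2 (fun y => lam y * (a y * b y + c y * d y - e y * f y - g y * h y)) x
    = pd2 lam x * (a x * b x + c x * d x - e x * f x - g x * h x)
      + lam x * ((pd2 a x * b x + a x * pd2 b x) + (pd2 c x * d x + c x * pd2 d x)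
          - (pd2 e x * f x + e x * pd2 f x) - (pd2 g x * h x + g x * pd2 h x)) := by
  have A := (hasDerivAt_pd2 ha x).mul (hasDerivAt_pd2 hb x)
  have C := (hasDerivAt_pd2 hc x).mul (hasDerivAt_pd2 hd x)
  have E := (hasDerivAt_pd2 he x).mul (hasDerivAt_pd2 hf x)
  have G := (hasDerivAt_pd2 hg x).mul (hasDerivAt_pd2 hh x)
  exact ((hasDerivAt_pd2 hl x).mul (((A.add C).sub E).sub G)).deriv

lemma pd3_lam_G (lam a b c d e f g h : Pt3 → ℝ) (hl : SM lam) (ha : SM a) (hb : SM b)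
    (hc : SM c) (hd : SM d) (he : SM e) (hf : SM f) (hg : SM g) (hh : SM h) (x : Pt3) :
    pd3 (fun y => lam y * (a y * b y + c y * d y - e y * f y - g y * h y)) x
    = pd3 lam x * (a x * b x + c x * d x - e x * f x - g x * h x)
      + lam x * ((pd3 a x * b x + a x * pd3 b x) + (pd3 c x * d x + c x * pd3 d x)
          - (pd3 e x * f x + e x * pd3 f x) - (pd3 g x * h x + g x * pd3 h x)) := by
  have A := (hasDerivAt_pd3 ha x).mul (hasDerivAt_pd3 hb x)
  have C := (hasDerivAt_pd3 hc x).mul (hasDerivAt_pd3 hd x)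
  have E := (hasDerivAt_pd3 he x).mul (hasDerivAt_pd3 hf x)
  have G := (hasDerivAt_pd3 hg x).mul (hasDerivAt_pd3 hh x)
  exact ((hasDerivAt_pd3 hl x).mul (((A.add C).sub E).sub G)).deriv

def G1f (u1 u2 u3 : Pt3 → ℝ) : Pt3 → ℝ :=
  fun y => u2 y * pd2 u1 y + u3 y * pd3 u1 y - u1 y * pd2 u2 y - u1 y * pd3 u3 y
def G2f (u1 u2 u3 : Pt3 → ℝ) : Pt3 → ℝ :=
  fun y => u1 y * pd1 u2 y + u3 y * pd3 u2 y - u2 y * pd1 u1 y - u2 y * pd3 u3 y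
def G3f (u1 u2 u3 : Pt3 → ℝ) : Pt3 → ℝ :=
  fun y => u1 y * pd1 u3 y + u2 y * pd2 u3 y - u3 y * pd1 u1 y - u3 y * pd2 u2 y

lemma sm_G1f {u1 u2 u3 : Pt3 → ℝ} (h1 : SM u1) (h2 : SM u2) (h3 : SM u3) :
    SM (G1f u1 u2 u3) :=
  (((h2.mul (sm_pd2 h1)).add (h3.mul (sm_pd3 h1))).sub (h1.mul (sm_pd2 h2))).sub
    (h1.mul (sm_pd3 h3))

lemma sm_G2f {u1 u2 u3 : Pt3 → ℝ} (h1 : SM u1) (h2 : SM u2) (h3 : SM u3) :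
    SM (G2f u1 u2 u3) :=
  (((h1.mul (sm_pd1 h2)).add (h3.mul (sm_pd3 h2))).sub (h2.mul (sm_pd1 h1))).sub
    (h2.mul (sm_pd3 h3))

lemma sm_G3f {u1 u2 u3 : Pt3 → ℝ} (h1 : SM u1) (h2 : SM u2) (h3 : SM u3) :
    SM (G3f u1 u2 u3) :=
  (((h1.mul (sm_pd1 h3)).add (h2.mul (sm_pd2 h3))).sub (h3.mul (sm_pd1 h1))).sub
    (h3.mul (sm_pd2 h2))

lemma van_G1f {R : ℝ} {u1 u2 u3 : Pt3 → ℝ} (h1 : Van R u1) (h2 : Van R u2) (h3 : Van R u3) :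
    Van R (G1f u1 u2 u3) :=
  ((( h2.mul_right _).add (h3.mul_right _)).sub (h1.mul_right _)).sub (h1.mul_right _)

lemma van_G2f {R : ℝ} {u1 u2 u3 : Pt3 → ℝ} (h1 : Van R u1) (h2 : Van R u2) (h3 : Van R u3) :
    Van R (G2f u1 u2 u3) :=
  ((( h1.mul_right _).add (h3.mul_right _)).sub (h2.mul_right _)).sub (h2.mul_right _)

lemma van_G3f {R : ℝ} {u1 u2 u3 : Pt3 → ℝ} (h1 : Van R u1) (h2 : Van R u2) (h3 : Van R u3) :
    Van R (G3f u1 u2 u3) :=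
  ((( h1.mul_right _).add (h2.mul_right _)).sub (h3.mul_right _)).sub (h3.mul_right _)

lemma key_pointwise {lam u1 u2 u3 : Pt3 → ℝ} (hl : SM lam) (h1 : SM u1) (h2 : SM u2)
    (h3 : SM u3) (x : Pt3) :
    lam x * ((pd1 u1 x)^2 + (pd2 u1 x)^2 + (pd3 u1 x)^2
        + (pd1 u2 x)^2 + (pd2 u2 x)^2 + (pd3 u2 x)^2
        + (pd1 u3 x)^2 + (pd2 u3 x)^2 + (pd3 u3 x)^2)
    = lam x * (pd1 u1 x + pd2 u2 x + pd3 u3 x)^2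
      + lam x * ((pd2 u3 x - pd3 u2 x)^2 + (pd3 u1 x - pd1 u3 x)^2 + (pd1 u2 x - pd2 u1 x)^2)
      + (pd1 (fun y => lam y * G1f u1 u2 u3 y) x + pd2 (fun y => lam y * G2f u1 u2 u3 y) x
          + pd3 (fun y => lam y * G3f u1 u2 u3 y) x)
      - (pd1 lam x * G1f u1 u2 u3 x + pd2 lam x * G2f u1 u2 u3 x
          + pd3 lam x * G3f u1 u2 u3 x) := by
  simp only [G1f, G2f, G3f]
  rw [pd1_lam_G lam u2 (pd2 u1) u3 (pd3 u1) u1 (pd2 u2) u1 (pd3 u3) hl h2 (sm_pd2 h1) h3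
      (sm_pd3 h1) h1 (sm_pd2 h2) h1 (sm_pd3 h3) x,
    pd2_lam_G lam u1 (pd1 u2) u3 (pd3 u2) u2 (pd1 u1) u2 (pd3 u3) hl h1 (sm_pd1 h2) h3
      (sm_pd3 h2) h2 (sm_pd1 h1) h2 (sm_pd3 h3) x,
    pd3_lam_G lam u1 (pd1 u3) u2 (pd2 u3) u3 (pd1 u1) u3 (pd2 u2) hl h1 (sm_pd1 h3) h2
      (sm_pd2 h3) h3 (sm_pd1 h1) h3 (sm_pd2 h2) x]
  linear_combination (-(lam x * u2 x)) * pd_comm12 h1 x - (lam x * u3 x) * pd_comm13 h1 x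
    + (lam x * u1 x) * pd_comm12 h2 x + (lam x * u1 x) * pd_comm13 h3 x
    - (lam x * u3 x) * pd_comm23 h2 x + (lam x * u2 x) * pd_comm23 h3 x

lemma pb (K u d : ℝ) (hK : 0 ≤ K) : K*(|u| * |d|) ≤ (1/32)*d^2 + 8*K^2*u^2 := by
  nlinarith [sq_nonneg (|d| - 16*K*|u|), sq_abs d, sq_abs u, abs_nonneg u, abs_nonneg d,
    mul_nonneg (mul_nonneg hK (abs_nonneg u)) (abs_nonneg d)]

lemma abs4 (a b c d : ℝ) : |a+b-c-d| ≤ |a|+|b|+|c|+|d| := by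
  have h1 := le_abs_self a; have h2 := le_abs_self b
  have h3 := le_abs_self c; have h4 := le_abs_self d
  have h5 := neg_abs_le a; have h6 := neg_abs_le b
  have h7 := neg_abs_le c; have h8 := neg_abs_le d
  rw [abs_le]; constructor <;> linarith

set_option maxHeartbeats 2000000 in
lemma scalar_est (K l u1 u2 u3 d11 d12 d13 d21 d22 d23 d31 d32 d33 P1 P2 P3 : ℝ)
    (hl : 1 ≤ l) (hK : 0 ≤ K) (hP : Real.sqrt (P1^2+P2^2+P3^2) ≤ K*l) :
    |P1*(u2*d21 + u3*d31 - u1*d22 - u1*d33)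
      + P2*(u1*d12 + u3*d32 - u2*d11 - u2*d33)
      + P3*(u1*d13 + u2*d23 - u3*d11 - u3*d22)|
    ≤ l*((3/8)*(d11^2+d12^2+d13^2+d21^2+d22^2+d23^2+d31^2+d32^2+d33^2)
        + 96*K^2*(u1^2+u2^2+u3^2)) := by
  have hl0 : (0:ℝ) ≤ l := by linarith
  have habs : ∀ p q r : ℝ, |p| ≤ Real.sqrt (p^2+q^2+r^2) := by
    intro p q r
    rw [← Real.sqrt_sq_eq_abs]
    exact Real.sqrt_le_sqrt (by nlinarith [sq_nonneg q, sq_nonneg r])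
  have h1 : |P1| ≤ K*l := le_trans (habs P1 P2 P3) hP
  have h2 : |P2| ≤ K*l := by
    refine le_trans ?_ hP
    rw [← Real.sqrt_sq_eq_abs]
    exact Real.sqrt_le_sqrt (by nlinarith [sq_nonneg P1, sq_nonneg P3])
  have h3 : |P3| ≤ K*l := by
    refine le_trans ?_ hP
    rw [← Real.sqrt_sq_eq_abs]
    exact Real.sqrt_le_sqrt (by nlinarith [sq_nonneg P1, sq_nonneg P2])
  set B1 := |u2| * |d21| + |u3| * |d31| + |u1| * |d22| + |u1| * |d33| with hB1
  set B2 := |u1| * |d12| + |u3| * |d32| + |u2| * |d11| + |u2| * |d33| with hB2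
  set B3 := |u1| * |d13| + |u2| * |d23| + |u3| * |d11| + |u3| * |d22| with hB3
  have hb1 : |u2*d21 + u3*d31 - u1*d22 - u1*d33| ≤ B1 := by
    have := abs4 (u2*d21) (u3*d31) (u1*d22) (u1*d33)
    simpa only [abs_mul] using this
  have hb2 : |u1*d12 + u3*d32 - u2*d11 - u2*d33| ≤ B2 := by
    have := abs4 (u1*d12) (u3*d32) (u2*d11) (u2*d33)
    simpa only [abs_mul] using this
  have hb3 : |u1*d13 + u2*d23 - u3*d11 - u3*d22| ≤ B3 := by
    have := abs4 (u1*d13) (u2*d23) (u3*d11) (u3*d22)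
    simpa only [abs_mul] using this
  have hB1n : 0 ≤ B1 := by positivity
  have hB2n : 0 ≤ B2 := by positivity
  have hB3n : 0 ≤ B3 := by positivity
  have step1 : |P1*(u2*d21 + u3*d31 - u1*d22 - u1*d33)
      + P2*(u1*d12 + u3*d32 - u2*d11 - u2*d33)
      + P3*(u1*d13 + u2*d23 - u3*d11 - u3*d22)|
      ≤ (K*l)*B1 + (K*l)*B2 + (K*l)*B3 := by
    calc |P1*(u2*d21 + u3*d31 - u1*d22 - u1*d33)
        + P2*(u1*d12 + u3*d32 - u2*d11 - u2*d33)
        + P3*(u1*d13 + u2*d23 - u3*d11 - u3*d22)|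
        ≤ |P1*(u2*d21 + u3*d31 - u1*d22 - u1*d33)|
          + |P2*(u1*d12 + u3*d32 - u2*d11 - u2*d33)|
          + |P3*(u1*d13 + u2*d23 - u3*d11 - u3*d22)| := abs_add_three _ _ _
      _ = |P1| * |u2*d21 + u3*d31 - u1*d22 - u1*d33|
          + |P2| * |u1*d12 + u3*d32 - u2*d11 - u2*d33|
          + |P3| * |u1*d13 + u2*d23 - u3*d11 - u3*d22| := by simp [abs_mul]
      _ ≤ (K*l)*B1 + (K*l)*B2 + (K*l)*B3 := by
          have e1 : |P1| * |u2*d21 + u3*d31 - u1*d22 - u1*d33| ≤ (K*l)*B1 :=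
            mul_le_mul h1 hb1 (abs_nonneg _) (by positivity)
          have e2 : |P2| * |u1*d12 + u3*d32 - u2*d11 - u2*d33| ≤ (K*l)*B2 :=
            mul_le_mul h2 hb2 (abs_nonneg _) (by positivity)
          have e3 : |P3| * |u1*d13 + u2*d23 - u3*d11 - u3*d22| ≤ (K*l)*B3 :=
            mul_le_mul h3 hb3 (abs_nonneg _) (by positivity)
          linarith
  have hsum : K*(B1 + B2 + B3)
      ≤ (3/8)*(d11^2+d12^2+d13^2+d21^2+d22^2+d23^2+d31^2+d32^2+d33^2)
        + 96*K^2*(u1^2+u2^2+u3^2) := by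
    have hKV : 0 ≤ K^2*(u1^2+u2^2+u3^2) := by positivity
    linarith [pb K u2 d21 hK, pb K u3 d31 hK, pb K u1 d22 hK, pb K u1 d33 hK,
      pb K u1 d12 hK, pb K u3 d32 hK, pb K u2 d11 hK, pb K u2 d33 hK,
      pb K u1 d13 hK, pb K u2 d23 hK, pb K u3 d11 hK, pb K u3 d22 hK,
      sq_nonneg d11, sq_nonneg d12, sq_nonneg d13, sq_nonneg d21, sq_nonneg d22,
      sq_nonneg d23, sq_nonneg d31, sq_nonneg d32, sq_nonneg d33, hKV, hB1, hB2, hB3]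
  calc |P1*(u2*d21 + u3*d31 - u1*d22 - u1*d33)
      + P2*(u1*d12 + u3*d32 - u2*d11 - u2*d33)
      + P3*(u1*d13 + u2*d23 - u3*d11 - u3*d22)|
      ≤ (K*l)*B1 + (K*l)*B2 + (K*l)*B3 := step1
    _ = l*(K*(B1+B2+B3)) := by ring
    _ ≤ l*((3/8)*(d11^2+d12^2+d13^2+d21^2+d22^2+d23^2+d31^2+d32^2+d33^2)
        + 96*K^2*(u1^2+u2^2+u3^2)) := mul_le_mul_of_nonneg_left hsum hl0

lemma Van.sq {R : ℝ} {g : Pt3 → ℝ} (hg : Van R g) : Van R (fun y => (g y)^2) :=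
  fun x hx => by simp only []; rw [hg x hx]; norm_num

set_option maxHeartbeats 1000000 in
/-- weighted div–curl lemma on thin domains: for every `K > 0` there is a
constant `C` (depending only on `K`) such that for every `δ ∈ (0,1]`, every smooth
weight `λ ≥ 1` with `|∇λ| ≤ Kλ` on the closure of `Ω_δ`, and every smooth vector field
`v` with bounded horizontal support,
`‖√λ ∇v‖² ≤ C (‖√λ div v‖² + ‖√λ curl v‖² + ‖√λ v‖² + |B(λ,v)|)` on `Ω_δ`. -/
theorem stmt5 (K : ℝ) (hK : 0 < K) :
    ∃ C : ℝ, 0 < C ∧ ∀ (δ : ℝ), δ ∈ Set.Ioc (0:ℝ) 1 →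
      ∀ lam : Pt3 → ℝ, ContDiff ℝ (⊤ : ℕ∞) lam →
      (∀ x ∈ closure (Omg δ), 1 ≤ lam x) →
      (∀ x ∈ closure (Omg δ),
        Real.sqrt ((pd1 lam x)^2 + (pd2 lam x)^2 + (pd3 lam x)^2) ≤ K * lam x) →
      ∀ v : Fin 3 → Pt3 → ℝ, (∀ i, ContDiff ℝ (⊤ : ℕ∞) (v i)) →
      (∃ R : ℝ, ∀ x : Pt3, R < Real.sqrt (x.1^2 + x.2.1^2) → ∀ i, v i x = 0) →
      (∫ x in Omg δ, lam x * ∑ i : Fin 3, ∑ j : Fin 3, (pdv j (v i) x)^2)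
        ≤ C * ((∫ x in Omg δ, lam x * (∑ i : Fin 3, pdv i (v i) x)^2)
             + (∫ x in Omg δ, lam x *
                 ((pd2 (v 2) x - pd3 (v 1) x)^2 + (pd3 (v 0) x - pd1 (v 2) x)^2
                   + (pd1 (v 1) x - pd2 (v 0) x)^2))
             + (∫ x in Omg δ, lam x * ∑ i : Fin 3, (v i x)^2)
             + |Bdry δ lam v|) := by
  refine ⟨160*K^2 + 2, by positivity, ?_⟩
  rintro δ ⟨hδ0, hδ1⟩ lam hlam0 hl1 hlK v hv0 ⟨R, hR⟩
  have hlam : SM lam := hlam0.of_le (by simp)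
  have hv : ∀ i, SM (v i) := fun i => (hv0 i).of_le (by simp)
  have hvan : ∀ i, Van R (v i) := fun i x hx => hR x hx i
  have mkInt : ∀ {f : Pt3 → ℝ}, SM f → Van R f → IntegrableOn f (Omg δ) :=
    fun hf hvf => integrableOn_helper hf.continuous hvf hδ1
  -- smoothness of all pieces
  have smG1 : SM (G1f (v 0) (v 1) (v 2)) := sm_G1f (hv 0) (hv 1) (hv 2)
  have smG2 : SM (G2f (v 0) (v 1) (v 2)) := sm_G2f (hv 0) (hv 1) (hv 2)
  have smG3 : SM (G3f (v 0) (v 1) (v 2)) := sm_G3f (hv 0) (hv 1) (hv 2)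
  have vanG1 : Van R (G1f (v 0) (v 1) (v 2)) := van_G1f (hvan 0) (hvan 1) (hvan 2)
  have vanG2 : Van R (G2f (v 0) (v 1) (v 2)) := van_G2f (hvan 0) (hvan 1) (hvan 2)
  have vanG3 : Van R (G3f (v 0) (v 1) (v 2)) := van_G3f (hvan 0) (hvan 1) (hvan 2)
  have smLG1 : SM (fun y => lam y * G1f (v 0) (v 1) (v 2) y) := hlam.mul smG1
  have smLG2 : SM (fun y => lam y * G2f (v 0) (v 1) (v 2) y) := hlam.mul smG2
  have smLG3 : SM (fun y => lam y * G3f (v 0) (v 1) (v 2) y) := hlam.mul smG3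
  have vanLG1 : Van R (fun y => lam y * G1f (v 0) (v 1) (v 2) y) := vanG1.mul_left lam
  have vanLG2 : Van R (fun y => lam y * G2f (v 0) (v 1) (v 2) y) := vanG2.mul_left lam
  have vanLG3 : Van R (fun y => lam y * G3f (v 0) (v 1) (v 2) y) := vanG3.mul_left lam
  have smS : SM (fun x => (pd1 (v 0) x)^2 + (pd2 (v 0) x)^2 + (pd3 (v 0) x)^2
      + (pd1 (v 1) x)^2 + (pd2 (v 1) x)^2 + (pd3 (v 1) x)^2
      + (pd1 (v 2) x)^2 + (pd2 (v 2) x)^2 + (pd3 (v 2) x)^2) :=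
    (((((((((sm_pd1 (hv 0)).pow 2).add ((sm_pd2 (hv 0)).pow 2)).add
      ((sm_pd3 (hv 0)).pow 2)).add ((sm_pd1 (hv 1)).pow 2)).add
      ((sm_pd2 (hv 1)).pow 2)).add ((sm_pd3 (hv 1)).pow 2)).add
      ((sm_pd1 (hv 2)).pow 2)).add ((sm_pd2 (hv 2)).pow 2)).add ((sm_pd3 (hv 2)).pow 2)
  have vanS : Van R (fun x => (pd1 (v 0) x)^2 + (pd2 (v 0) x)^2 + (pd3 (v 0) x)^2
      + (pd1 (v 1) x)^2 + (pd2 (v 1) x)^2 + (pd3 (v 1) x)^2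
      + (pd1 (v 2) x)^2 + (pd2 (v 2) x)^2 + (pd3 (v 2) x)^2) :=
    (((((((((hvan 0).pd1.sq).add ((hvan 0).pd2.sq)).add ((hvan 0).pd3.sq)).add
      ((hvan 1).pd1.sq)).add ((hvan 1).pd2.sq)).add ((hvan 1).pd3.sq)).add
      ((hvan 2).pd1.sq)).add ((hvan 2).pd2.sq)).add ((hvan 2).pd3.sq)
  have smV : SM (fun x => (v 0 x)^2 + (v 1 x)^2 + (v 2 x)^2) :=
    (((hv 0).pow 2).add ((hv 1).pow 2)).add ((hv 2).pow 2)
  have vanV : Van R (fun x => (v 0 x)^2 + (v 1 x)^2 + (v 2 x)^2) :=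
    (((hvan 0).sq).add ((hvan 1).sq)).add ((hvan 2).sq)
  have smdiv : SM (fun x => pd1 (v 0) x + pd2 (v 1) x + pd3 (v 2) x) :=
    ((sm_pd1 (hv 0)).add (sm_pd2 (hv 1))).add (sm_pd3 (hv 2))
  have vandiv : Van R (fun x => pd1 (v 0) x + pd2 (v 1) x + pd3 (v 2) x) :=
    (((hvan 0).pd1).add ((hvan 1).pd2)).add ((hvan 2).pd3)
  have smcurl : SM (fun x => (pd2 (v 2) x - pd3 (v 1) x)^2 + (pd3 (v 0) x - pd1 (v 2) x)^2
      + (pd1 (v 1) x - pd2 (v 0) x)^2) :=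
    ((((sm_pd2 (hv 2)).sub (sm_pd3 (hv 1))).pow 2).add
      (((sm_pd3 (hv 0)).sub (sm_pd1 (hv 2))).pow 2)).add
      (((sm_pd1 (hv 1)).sub (sm_pd2 (hv 0))).pow 2)
  have vancurl : Van R (fun x => (pd2 (v 2) x - pd3 (v 1) x)^2 + (pd3 (v 0) x - pd1 (v 2) x)^2
      + (pd1 (v 1) x - pd2 (v 0) x)^2) :=
    ((((hvan 2).pd2.sub ((hvan 1).pd3)).sq).add
      (((hvan 0).pd3.sub ((hvan 2).pd1)).sq)).add
      (((hvan 1).pd1.sub ((hvan 0).pd2)).sq)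
  -- integrabilities
  have hIntA : IntegrableOn (fun x => lam x * (pd1 (v 0) x + pd2 (v 1) x + pd3 (v 2) x)^2)
      (Omg δ) := mkInt (hlam.mul (smdiv.pow 2)) ((vandiv.sq).mul_left lam)
  have hIntB : IntegrableOn (fun x => lam x * ((pd2 (v 2) x - pd3 (v 1) x)^2
      + (pd3 (v 0) x - pd1 (v 2) x)^2 + (pd1 (v 1) x - pd2 (v 0) x)^2)) (Omg δ) :=
    mkInt (hlam.mul smcurl) (vancurl.mul_left lam)
  have hIntC1 : IntegrableOn (fun x => pd1 (fun y => lam y * G1f (v 0) (v 1) (v 2) y) x)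
      (Omg δ) := mkInt (sm_pd1 smLG1) vanLG1.pd1
  have hIntC2 : IntegrableOn (fun x => pd2 (fun y => lam y * G2f (v 0) (v 1) (v 2) y) x)
      (Omg δ) := mkInt (sm_pd2 smLG2) vanLG2.pd2
  have hIntC3 : IntegrableOn (fun x => pd3 (fun y => lam y * G3f (v 0) (v 1) (v 2) y) x)
      (Omg δ) := mkInt (sm_pd3 smLG3) vanLG3.pd3
  have hIntD : IntegrableOn (fun x => pd1 lam x * G1f (v 0) (v 1) (v 2) x
      + pd2 lam x * G2f (v 0) (v 1) (v 2) x + pd3 lam x * G3f (v 0) (v 1) (v 2) x) (Omg δ) :=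
    mkInt ((((sm_pd1 hlam).mul smG1).add ((sm_pd2 hlam).mul smG2)).add
      ((sm_pd3 hlam).mul smG3))
      (((vanG1.mul_left _).add (vanG2.mul_left _)).add (vanG3.mul_left _))
  have hIntS : IntegrableOn (fun x => lam x * ((pd1 (v 0) x)^2 + (pd2 (v 0) x)^2
      + (pd3 (v 0) x)^2 + (pd1 (v 1) x)^2 + (pd2 (v 1) x)^2 + (pd3 (v 1) x)^2
      + (pd1 (v 2) x)^2 + (pd2 (v 2) x)^2 + (pd3 (v 2) x)^2)) (Omg δ) :=
    mkInt (hlam.mul smS) (vanS.mul_left lam)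
  have hIntV : IntegrableOn (fun x => lam x * ((v 0 x)^2 + (v 1 x)^2 + (v 2 x)^2)) (Omg δ) :=
    mkInt (hlam.mul smV) (vanV.mul_left lam)
  -- the pointwise divergence identity, integrated
  have hkey : ∀ x : Pt3, lam x * ((pd1 (v 0) x)^2 + (pd2 (v 0) x)^2 + (pd3 (v 0) x)^2
      + (pd1 (v 1) x)^2 + (pd2 (v 1) x)^2 + (pd3 (v 1) x)^2
      + (pd1 (v 2) x)^2 + (pd2 (v 2) x)^2 + (pd3 (v 2) x)^2)
      = lam x * (pd1 (v 0) x + pd2 (v 1) x + pd3 (v 2) x)^2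
        + lam x * ((pd2 (v 2) x - pd3 (v 1) x)^2 + (pd3 (v 0) x - pd1 (v 2) x)^2
            + (pd1 (v 1) x - pd2 (v 0) x)^2)
        + (pd1 (fun y => lam y * G1f (v 0) (v 1) (v 2) y) x
            + pd2 (fun y => lam y * G2f (v 0) (v 1) (v 2) y) x
            + pd3 (fun y => lam y * G3f (v 0) (v 1) (v 2) y) x)
        - (pd1 lam x * G1f (v 0) (v 1) (v 2) x + pd2 lam x * G2f (v 0) (v 1) (v 2) x
            + pd3 lam x * G3f (v 0) (v 1) (v 2) x) :=
    key_pointwise hlam (hv 0) (hv 1) (hv 2)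
  have e0 : (∫ x in Omg δ, lam x * ((pd1 (v 0) x)^2 + (pd2 (v 0) x)^2 + (pd3 (v 0) x)^2
      + (pd1 (v 1) x)^2 + (pd2 (v 1) x)^2 + (pd3 (v 1) x)^2
      + (pd1 (v 2) x)^2 + (pd2 (v 2) x)^2 + (pd3 (v 2) x)^2))
      = ∫ x in Omg δ, (lam x * (pd1 (v 0) x + pd2 (v 1) x + pd3 (v 2) x)^2
        + lam x * ((pd2 (v 2) x - pd3 (v 1) x)^2 + (pd3 (v 0) x - pd1 (v 2) x)^2
            + (pd1 (v 1) x - pd2 (v 0) x)^2)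
        + (pd1 (fun y => lam y * G1f (v 0) (v 1) (v 2) y) x
            + pd2 (fun y => lam y * G2f (v 0) (v 1) (v 2) y) x
            + pd3 (fun y => lam y * G3f (v 0) (v 1) (v 2) y) x)
        - (pd1 lam x * G1f (v 0) (v 1) (v 2) x + pd2 lam x * G2f (v 0) (v 1) (v 2) x
            + pd3 lam x * G3f (v 0) (v 1) (v 2) x)) :=
    integral_congr_ae (Filter.Eventually.of_forall hkey)
  have e1 : (∫ x in Omg δ, (lam x * (pd1 (v 0) x + pd2 (v 1) x + pd3 (v 2) x)^2
        + lam x * ((pd2 (v 2) x - pd3 (v 1) x)^2 + (pd3 (v 0) x - pd1 (v 2) x)^2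
            + (pd1 (v 1) x - pd2 (v 0) x)^2)
        + (pd1 (fun y => lam y * G1f (v 0) (v 1) (v 2) y) x
            + pd2 (fun y => lam y * G2f (v 0) (v 1) (v 2) y) x
            + pd3 (fun y => lam y * G3f (v 0) (v 1) (v 2) y) x)
        - (pd1 lam x * G1f (v 0) (v 1) (v 2) x + pd2 lam x * G2f (v 0) (v 1) (v 2) x
            + pd3 lam x * G3f (v 0) (v 1) (v 2) x)))
      = (∫ x in Omg δ, (lam x * (pd1 (v 0) x + pd2 (v 1) x + pd3 (v 2) x)^2
        + lam x * ((pd2 (v 2) x - pd3 (v 1) x)^2 + (pd3 (v 0) x - pd1 (v 2) x)^2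
            + (pd1 (v 1) x - pd2 (v 0) x)^2)
        + (pd1 (fun y => lam y * G1f (v 0) (v 1) (v 2) y) x
            + pd2 (fun y => lam y * G2f (v 0) (v 1) (v 2) y) x
            + pd3 (fun y => lam y * G3f (v 0) (v 1) (v 2) y) x)))
        - ∫ x in Omg δ, (pd1 lam x * G1f (v 0) (v 1) (v 2) x
            + pd2 lam x * G2f (v 0) (v 1) (v 2) x + pd3 lam x * G3f (v 0) (v 1) (v 2) x) :=
    integral_sub ((hIntA.add hIntB).add ((hIntC1.add hIntC2).add hIntC3)) hIntD
  have e2 : (∫ x in Omg δ, (lam x * (pd1 (v 0) x + pd2 (v 1) x + pd3 (v 2) x)^2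
        + lam x * ((pd2 (v 2) x - pd3 (v 1) x)^2 + (pd3 (v 0) x - pd1 (v 2) x)^2
            + (pd1 (v 1) x - pd2 (v 0) x)^2)
        + (pd1 (fun y => lam y * G1f (v 0) (v 1) (v 2) y) x
            + pd2 (fun y => lam y * G2f (v 0) (v 1) (v 2) y) x
            + pd3 (fun y => lam y * G3f (v 0) (v 1) (v 2) y) x)))
      = (∫ x in Omg δ, (lam x * (pd1 (v 0) x + pd2 (v 1) x + pd3 (v 2) x)^2
        + lam x * ((pd2 (v 2) x - pd3 (v 1) x)^2 + (pd3 (v 0) x - pd1 (v 2) x)^2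
            + (pd1 (v 1) x - pd2 (v 0) x)^2)))
        + ∫ x in Omg δ, (pd1 (fun y => lam y * G1f (v 0) (v 1) (v 2) y) x
            + pd2 (fun y => lam y * G2f (v 0) (v 1) (v 2) y) x
            + pd3 (fun y => lam y * G3f (v 0) (v 1) (v 2) y) x) :=
    integral_add (hIntA.add hIntB) ((hIntC1.add hIntC2).add hIntC3)
  have e3 : (∫ x in Omg δ, (lam x * (pd1 (v 0) x + pd2 (v 1) x + pd3 (v 2) x)^2
        + lam x * ((pd2 (v 2) x - pd3 (v 1) x)^2 + (pd3 (v 0) x - pd1 (v 2) x)^2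
            + (pd1 (v 1) x - pd2 (v 0) x)^2)))
      = (∫ x in Omg δ, lam x * (pd1 (v 0) x + pd2 (v 1) x + pd3 (v 2) x)^2)
        + ∫ x in Omg δ, lam x * ((pd2 (v 2) x - pd3 (v 1) x)^2
            + (pd3 (v 0) x - pd1 (v 2) x)^2 + (pd1 (v 1) x - pd2 (v 0) x)^2) :=
    integral_add hIntA hIntB
  have e4 : (∫ x in Omg δ, (pd1 (fun y => lam y * G1f (v 0) (v 1) (v 2) y) x
            + pd2 (fun y => lam y * G2f (v 0) (v 1) (v 2) y) x
            + pd3 (fun y => lam y * G3f (v 0) (v 1) (v 2) y) x))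
      = ((∫ x in Omg δ, pd1 (fun y => lam y * G1f (v 0) (v 1) (v 2) y) x)
          + ∫ x in Omg δ, pd2 (fun y => lam y * G2f (v 0) (v 1) (v 2) y) x)
        + ∫ x in Omg δ, pd3 (fun y => lam y * G3f (v 0) (v 1) (v 2) y) x := by
    have e4a : (∫ x in Omg δ, (pd1 (fun y => lam y * G1f (v 0) (v 1) (v 2) y) x
            + pd2 (fun y => lam y * G2f (v 0) (v 1) (v 2) y) x
            + pd3 (fun y => lam y * G3f (v 0) (v 1) (v 2) y) x))
        = (∫ x in Omg δ, (pd1 (fun y => lam y * G1f (v 0) (v 1) (v 2) y) x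
            + pd2 (fun y => lam y * G2f (v 0) (v 1) (v 2) y) x))
          + ∫ x in Omg δ, pd3 (fun y => lam y * G3f (v 0) (v 1) (v 2) y) x :=
      integral_add (hIntC1.add hIntC2) hIntC3
    have e4b : (∫ x in Omg δ, (pd1 (fun y => lam y * G1f (v 0) (v 1) (v 2) y) x
            + pd2 (fun y => lam y * G2f (v 0) (v 1) (v 2) y) x))
        = (∫ x in Omg δ, pd1 (fun y => lam y * G1f (v 0) (v 1) (v 2) y) x)
          + ∫ x in Omg δ, pd2 (fun y => lam y * G2f (v 0) (v 1) (v 2) y) x :=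
      integral_add hIntC1 hIntC2
    rw [e4a, e4b]
  have z1 : (∫ x in Omg δ, pd1 (fun y => lam y * G1f (v 0) (v 1) (v 2) y) x) = 0 :=
    ibp1 smLG1 vanLG1 hδ1
  have z2 : (∫ x in Omg δ, pd2 (fun y => lam y * G2f (v 0) (v 1) (v 2) y) x) = 0 :=
    ibp2 smLG2 vanLG2 hδ1
  have z3 : (∫ x in Omg δ, pd3 (fun y => lam y * G3f (v 0) (v 1) (v 2) y) x)
      = (∫ w : ℝ × ℝ, (fun y => lam y * G3f (v 0) (v 1) (v 2) y) (w.1, w.2, δ))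
        - ∫ w : ℝ × ℝ, (fun y => lam y * G3f (v 0) (v 1) (v 2) y) (w.1, w.2, -δ) :=
    ibp3 smLG3 vanLG3 hδ0 hδ1
  have zB : (∫ w : ℝ × ℝ, (fun y => lam y * G3f (v 0) (v 1) (v 2) y) (w.1, w.2, δ))
        - (∫ w : ℝ × ℝ, (fun y => lam y * G3f (v 0) (v 1) (v 2) y) (w.1, w.2, -δ))
      = Bdry δ lam v := by
    unfold Bdry
    congr 1 <;> exact integral_congr_ae (Filter.Eventually.of_forall (fun w => by
      simp only [G1f, G2f, G3f]; ring))
  -- abbreviate the main integrals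
  set I : ℝ := ∫ x in Omg δ, lam x * ((pd1 (v 0) x)^2 + (pd2 (v 0) x)^2 + (pd3 (v 0) x)^2
      + (pd1 (v 1) x)^2 + (pd2 (v 1) x)^2 + (pd3 (v 1) x)^2
      + (pd1 (v 2) x)^2 + (pd2 (v 2) x)^2 + (pd3 (v 2) x)^2) with hIdef
  set D1 : ℝ := ∫ x in Omg δ, lam x * (pd1 (v 0) x + pd2 (v 1) x + pd3 (v 2) x)^2 with hD1def
  set C1v : ℝ := ∫ x in Omg δ, lam x * ((pd2 (v 2) x - pd3 (v 1) x)^2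
      + (pd3 (v 0) x - pd1 (v 2) x)^2 + (pd1 (v 1) x - pd2 (v 0) x)^2) with hC1def
  set Iv : ℝ := ∫ x in Omg δ, lam x * ((v 0 x)^2 + (v 1 x)^2 + (v 2 x)^2) with hIvdef
  set Ev : ℝ := ∫ x in Omg δ, (pd1 lam x * G1f (v 0) (v 1) (v 2) x
      + pd2 lam x * G2f (v 0) (v 1) (v 2) x + pd3 lam x * G3f (v 0) (v 1) (v 2) x) with hEvdef
  have hIeq : I = D1 + C1v + Bdry δ lam v - Ev := by
    rw [e0, e1, e2, e3, e4, z1, z2, z3, zB]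
    ring
  -- bound the commutator term
  have hEabs : |Ev| ≤ ∫ x in Omg δ, |pd1 lam x * G1f (v 0) (v 1) (v 2) x
      + pd2 lam x * G2f (v 0) (v 1) (v 2) x + pd3 lam x * G3f (v 0) (v 1) (v 2) x| := by
    rw [hEvdef]
    simpa [Real.norm_eq_abs] using
      norm_integral_le_integral_norm (μ := (volume : Measure Pt3).restrict (Omg δ))
        (f := fun x => pd1 lam x * G1f (v 0) (v 1) (v 2) x
          + pd2 lam x * G2f (v 0) (v 1) (v 2) x + pd3 lam x * G3f (v 0) (v 1) (v 2) x)
  have hmono : (∫ x in Omg δ, |pd1 lam x * G1f (v 0) (v 1) (v 2) x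
      + pd2 lam x * G2f (v 0) (v 1) (v 2) x + pd3 lam x * G3f (v 0) (v 1) (v 2) x|)
      ≤ ∫ x in Omg δ, lam x * ((3/8)*((pd1 (v 0) x)^2 + (pd2 (v 0) x)^2 + (pd3 (v 0) x)^2
        + (pd1 (v 1) x)^2 + (pd2 (v 1) x)^2 + (pd3 (v 1) x)^2
        + (pd1 (v 2) x)^2 + (pd2 (v 2) x)^2 + (pd3 (v 2) x)^2)
        + 96*K^2*((v 0 x)^2 + (v 1 x)^2 + (v 2 x)^2)) := by
    apply setIntegral_mono_on hIntD.abs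
      (mkInt (hlam.mul ((contDiff_const.mul smS).add (contDiff_const.mul smV)))
        (((vanS.mul_left _).add (vanV.mul_left _)).mul_left lam)) (omg_meas δ)
    intro x hx
    have h1 := hl1 x (subset_closure hx)
    have h2 := hlK x (subset_closure hx)
    have hs := scalar_est K (lam x) (v 0 x) (v 1 x) (v 2 x)
      (pd1 (v 0) x) (pd1 (v 1) x) (pd1 (v 2) x)
      (pd2 (v 0) x) (pd2 (v 1) x) (pd2 (v 2) x)
      (pd3 (v 0) x) (pd3 (v 1) x) (pd3 (v 2) x)
      (pd1 lam x) (pd2 lam x) (pd3 lam x) h1 hK.le h2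
    calc |pd1 lam x * G1f (v 0) (v 1) (v 2) x + pd2 lam x * G2f (v 0) (v 1) (v 2) x
        + pd3 lam x * G3f (v 0) (v 1) (v 2) x|
        = |pd1 lam x * (v 1 x * pd2 (v 0) x + v 2 x * pd3 (v 0) x - v 0 x * pd2 (v 1) x
            - v 0 x * pd3 (v 2) x)
          + pd2 lam x * (v 0 x * pd1 (v 1) x + v 2 x * pd3 (v 1) x - v 1 x * pd1 (v 0) x
            - v 1 x * pd3 (v 2) x)
          + pd3 lam x * (v 0 x * pd1 (v 2) x + v 1 x * pd2 (v 2) x - v 2 x * pd1 (v 0) x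
            - v 2 x * pd2 (v 1) x)| := by simp only [G1f, G2f, G3f]
      _ ≤ (lam x)*((3/8)*((pd1 (v 0) x)^2 + (pd1 (v 1) x)^2 + (pd1 (v 2) x)^2
          + (pd2 (v 0) x)^2 + (pd2 (v 1) x)^2 + (pd2 (v 2) x)^2
          + (pd3 (v 0) x)^2 + (pd3 (v 1) x)^2 + (pd3 (v 2) x)^2)
          + 96*K^2*((v 0 x)^2 + (v 1 x)^2 + (v 2 x)^2)) := hs
      _ = lam x * ((3/8)*((pd1 (v 0) x)^2 + (pd2 (v 0) x)^2 + (pd3 (v 0) x)^2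
          + (pd1 (v 1) x)^2 + (pd2 (v 1) x)^2 + (pd3 (v 1) x)^2
          + (pd1 (v 2) x)^2 + (pd2 (v 2) x)^2 + (pd3 (v 2) x)^2)
          + 96*K^2*((v 0 x)^2 + (v 1 x)^2 + (v 2 x)^2)) := by ring
  have hf5 : (∫ x in Omg δ, lam x * ((3/8)*((pd1 (v 0) x)^2 + (pd2 (v 0) x)^2
      + (pd3 (v 0) x)^2 + (pd1 (v 1) x)^2 + (pd2 (v 1) x)^2 + (pd3 (v 1) x)^2
      + (pd1 (v 2) x)^2 + (pd2 (v 2) x)^2 + (pd3 (v 2) x)^2)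
      + 96*K^2*((v 0 x)^2 + (v 1 x)^2 + (v 2 x)^2)))
      = (3/8)*I + 96*K^2*Iv := by
    have ee : (∫ x in Omg δ, lam x * ((3/8)*((pd1 (v 0) x)^2 + (pd2 (v 0) x)^2
        + (pd3 (v 0) x)^2 + (pd1 (v 1) x)^2 + (pd2 (v 1) x)^2 + (pd3 (v 1) x)^2
        + (pd1 (v 2) x)^2 + (pd2 (v 2) x)^2 + (pd3 (v 2) x)^2)
        + 96*K^2*((v 0 x)^2 + (v 1 x)^2 + (v 2 x)^2)))
        = ∫ x in Omg δ, ((3/8) * (lam x * ((pd1 (v 0) x)^2 + (pd2 (v 0) x)^2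
          + (pd3 (v 0) x)^2 + (pd1 (v 1) x)^2 + (pd2 (v 1) x)^2 + (pd3 (v 1) x)^2
          + (pd1 (v 2) x)^2 + (pd2 (v 2) x)^2 + (pd3 (v 2) x)^2))
          + (96*K^2) * (lam x * ((v 0 x)^2 + (v 1 x)^2 + (v 2 x)^2))) :=
      integral_congr_ae (Filter.Eventually.of_forall (fun x => by ring))
    have e5 : (∫ x in Omg δ, ((3/8) * (lam x * ((pd1 (v 0) x)^2 + (pd2 (v 0) x)^2
          + (pd3 (v 0) x)^2 + (pd1 (v 1) x)^2 + (pd2 (v 1) x)^2 + (pd3 (v 1) x)^2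
          + (pd1 (v 2) x)^2 + (pd2 (v 2) x)^2 + (pd3 (v 2) x)^2))
          + (96*K^2) * (lam x * ((v 0 x)^2 + (v 1 x)^2 + (v 2 x)^2))))
        = (∫ x in Omg δ, (3/8) * (lam x * ((pd1 (v 0) x)^2 + (pd2 (v 0) x)^2
          + (pd3 (v 0) x)^2 + (pd1 (v 1) x)^2 + (pd2 (v 1) x)^2 + (pd3 (v 1) x)^2
          + (pd1 (v 2) x)^2 + (pd2 (v 2) x)^2 + (pd3 (v 2) x)^2)))
          + ∫ x in Omg δ, (96*K^2) * (lam x * ((v 0 x)^2 + (v 1 x)^2 + (v 2 x)^2)) :=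
      integral_add (hIntS.const_mul _) (hIntV.const_mul _)
    have e6 : (∫ x in Omg δ, (3/8) * (lam x * ((pd1 (v 0) x)^2 + (pd2 (v 0) x)^2
          + (pd3 (v 0) x)^2 + (pd1 (v 1) x)^2 + (pd2 (v 1) x)^2 + (pd3 (v 1) x)^2
          + (pd1 (v 2) x)^2 + (pd2 (v 2) x)^2 + (pd3 (v 2) x)^2)))
        = (3/8) * I := by
      rw [hIdef]
      exact integral_const_mul _ _
    have e7 : (∫ x in Omg δ, (96*K^2) * (lam x * ((v 0 x)^2 + (v 1 x)^2 + (v 2 x)^2)))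
        = (96*K^2) * Iv := by
      rw [hIvdef]
      exact integral_const_mul _ _
    rw [ee, e5, e6, e7]
  -- nonnegativity
  have hlpos : ∀ x ∈ Omg δ, (0:ℝ) ≤ lam x := fun x hx => by
    linarith [hl1 x (subset_closure hx)]
  have hD1n : 0 ≤ D1 := setIntegral_nonneg (omg_meas δ)
    (fun x hx => mul_nonneg (hlpos x hx) (sq_nonneg _))
  have hC1n : 0 ≤ C1v := setIntegral_nonneg (omg_meas δ)
    (fun x hx => mul_nonneg (hlpos x hx) (by positivity))
  have hIvn : 0 ≤ Iv := setIntegral_nonneg (omg_meas δ)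
    (fun x hx => mul_nonneg (hlpos x hx) (by positivity))
  have hBn : 0 ≤ |Bdry δ lam v| := abs_nonneg _
  have hEb : |Ev| ≤ (3/8)*I + 96*K^2*Iv := by
    calc |Ev| ≤ _ := hEabs
      _ ≤ _ := hmono
      _ = (3/8)*I + 96*K^2*Iv := hf5
  clear_value I D1 C1v Iv Ev
  have hImain : I ≤ (160*K^2 + 2) * (D1 + C1v + Iv + |Bdry δ lam v|) := by
    have hIb : I ≤ D1 + C1v + |Bdry δ lam v| + ((3/8)*I + 96*K^2*Iv) := by
      have b1 := le_abs_self (Bdry δ lam v)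
      have b2 := le_abs_self Ev
      have b3 := neg_abs_le Ev
      linarith
    have hk2 : (0:ℝ) ≤ K^2 := sq_nonneg K
    nlinarith [mul_nonneg hk2 hD1n, mul_nonneg hk2 hC1n, mul_nonneg hk2 hIvn,
      mul_nonneg hk2 hBn, mul_nonneg hk2 hIvn]
  -- convert the goal
  simp only [pdv, Fin.sum_univ_three, Matrix.cons_val_zero, Matrix.cons_val_one,
    Matrix.head_cons, Matrix.cons_val_two, Matrix.tail_cons]
  have egoal : (∫ x in Omg δ, lam x * ((pd1 (v 0) x)^2 + (pd2 (v 0) x)^2 + (pd3 (v 0) x)^2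
      + ((pd1 (v 1) x)^2 + (pd2 (v 1) x)^2 + (pd3 (v 1) x)^2)
      + ((pd1 (v 2) x)^2 + (pd2 (v 2) x)^2 + (pd3 (v 2) x)^2)))
      = I := by
    rw [hIdef]
    exact integral_congr_ae (Filter.Eventually.of_forall (fun x => by ring))
  calc (∫ x in Omg δ, lam x * ((pd1 (v 0) x)^2 + (pd2 (v 0) x)^2 + (pd3 (v 0) x)^2
      + ((pd1 (v 1) x)^2 + (pd2 (v 1) x)^2 + (pd3 (v 1) x)^2)
      + ((pd1 (v 2) x)^2 + (pd2 (v 2) x)^2 + (pd3 (v 2) x)^2)))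
      = I := egoal
    _ ≤ (160*K^2 + 2) * (D1 + C1v + Iv + |Bdry δ lam v|) := hImain
    _ = (160*K^2 + 2) * ((∫ x in Omg δ, lam x * (pd1 (v 0) x + pd2 (v 1) x + pd3 (v 2) x)^2)
        + C1v
        + (∫ x in Omg δ, lam x * ((v 0 x)^2 + (v 1 x)^2 + (v 2 x)^2))
        + |Bdry δ lam v|) := by rw [hD1def, hIvdef]
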